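/- Let A(t) be an n×n real matrix function of class C¹ on [a,b] with det A(t) ≠ 0 for t ∈ (a,b). Suppose det A(a) = 0, det A(b) ≠ 0, and there exist a nonzero real h_a and a positive integer ν_a such that det A(a+t) = h_a t^{ν_a} + o(t^{ν_a}) as t → 0+. Fix α > 0, γ > 0, κ > 0. Then there exists λ > 0, depending only on A, α, γ and κ, such that for every continuous ℝⁿ-valued function r on [a,b] satisfying ‖r‖_{i,a,b} ≥ α‖r‖_{a,b} and |A(t)r(t)| ≤ κ(t−a)^{ν_a} ‖r‖_{a,b} for t ∈ [a, a+γ), one has ‖Ar‖_{i,a,b} ≥ λ‖r‖_{i,a,b}. -/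

import Mathlib

/-!
The hypothesis `‖r‖_{i,a,b} ≥ α ‖r‖_{a,b}` keeps `r` from concentrating near the endpoints: the two
end pieces of `[a, b]` of length `δ ≤ α / 4` carry at most half of `‖r‖_{i,a,b}`. On the compact
middle piece `[a + δ, b - δ] ⊆ (a, b)` the matrices `A t` are invertible with uniformly bounded
inverses, so `|A t v| ≥ c |v|` there, and `λ = c / 2` works.
-/

open Set Filter Asymptotics Topology MeasureTheory

/-- Euclidean norm of a vector in `ℝⁿ`. -/
noncomputable def euclNorm {n : ℕ} (v : Fin n → ℝ) : ℝ := Real.sqrt (∑ i, v i ^ 2)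

/-- `‖q‖_{a,b} = max_{t ∈ [a,b]} |q(t)|`. -/
noncomputable def supNorm {n : ℕ} (a b : ℝ) (q : ℝ → Fin n → ℝ) : ℝ :=
  sSup ((fun t => euclNorm (q t)) '' Set.Icc a b)

/-- `‖q‖_{i,a,b} = ∫_a^b |q(t)| dt`. -/
noncomputable def intNorm {n : ℕ} (a b : ℝ) (q : ℝ → Fin n → ℝ) : ℝ :=
  ∫ t in a..b, euclNorm (q t)

theorem euclNorm_nonneg {n : ℕ} (v : Fin n → ℝ) : 0 ≤ euclNorm v := Real.sqrt_nonneg _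

theorem continuous_euclNorm {n : ℕ} : Continuous (euclNorm (n := n)) := by fun_prop [euclNorm]

theorem euclNorm_eq_norm_toLp {n : ℕ} (v : Fin n → ℝ) : euclNorm v = ‖WithLp.toLp 2 v‖ := by
  simp [euclNorm, EuclideanSpace.norm_eq]

open Matrix in
theorem IsCompact.exists_pos_mul_norm_le_norm_toEuclideanCLM {X 𝕜 ι : Type*} [TopologicalSpace X]
    [RCLike 𝕜] [Fintype ι] [DecidableEq ι] {K : Set X} (hK : IsCompact K)
    {A : X → Matrix ι ι 𝕜} (hA : ContinuousOn A K) (hdet : ∀ t ∈ K, (A t).det ≠ 0) :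
    ∃ c > 0, ∀ t ∈ K, ∀ v, c * ‖v‖ ≤ ‖toEuclideanCLM (𝕜 := 𝕜) (A t) v‖ := by
  have hinv : ContinuousOn (fun t => toEuclideanCLM (𝕜 := 𝕜) (A t)⁻¹) K := by
    refine (LinearMap.continuous_of_finiteDimensional
      (toEuclideanCLM (n := ι) (𝕜 := 𝕜)).toAlgEquiv.toLinearMap).comp_continuousOn ?_
    intro t ht
    exact (continuousAt_matrix_inv _ (by
      rw [Ring.inverse_eq_inv']; exact continuousAt_inv₀ (hdet t ht))).comp_continuousWithinAt
      (hA t ht)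
  obtain ⟨C, hC⟩ := hK.exists_bound_of_continuousOn hinv
  refine ⟨(max C 1)⁻¹, by positivity, fun t ht v => ?_⟩
  have hv : toEuclideanCLM (𝕜 := 𝕜) (A t)⁻¹ (toEuclideanCLM (𝕜 := 𝕜) (A t) v) = v := by
    change (toEuclideanCLM (𝕜 := 𝕜) (A t)⁻¹ * toEuclideanCLM (𝕜 := 𝕜) (A t)) v = v
    rw [← map_mul, nonsing_inv_mul _ (isUnit_iff_ne_zero.mpr (hdet t ht)), map_one]
    rfl
  rw [inv_mul_le_iff₀ (by positivity)]
  calc ‖v‖ ≤ ‖toEuclideanCLM (𝕜 := 𝕜) (A t)⁻¹‖ * ‖toEuclideanCLM (𝕜 := 𝕜) (A t) v‖ := by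
        conv_lhs => rw [← hv]
        exact ContinuousLinearMap.le_opNorm _ _
    _ ≤ max C 1 * ‖toEuclideanCLM (𝕜 := 𝕜) (A t) v‖ := by
        gcongr
        exact (hC t ht).trans (le_max_left _ _)

theorem IsCompact.exists_pos_mul_euclNorm_le_euclNorm_mulVec {X : Type*} [TopologicalSpace X]
    {n : ℕ} {K : Set X} (hK : IsCompact K) {A : X → Matrix (Fin n) (Fin n) ℝ}
    (hA : ContinuousOn A K) (hdet : ∀ t ∈ K, (A t).det ≠ 0) :
    ∃ c > 0, ∀ t ∈ K, ∀ v, c * euclNorm v ≤ euclNorm ((A t).mulVec v) := by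
  obtain ⟨c, hc, hcA⟩ := hK.exists_pos_mul_norm_le_norm_toEuclideanCLM hA hdet
  exact ⟨c, hc, fun t ht v => by
    simpa [euclNorm_eq_norm_toLp] using hcA t ht (WithLp.toLp 2 v)⟩

theorem euclNorm_le_supNorm {n : ℕ} {a b t : ℝ} {r : ℝ → Fin n → ℝ}
    (hr : ContinuousOn r (Icc a b)) (ht : t ∈ Icc a b) : euclNorm (r t) ≤ supNorm a b r :=
  le_csSup ((isCompact_Icc.image_of_continuousOn
    (continuous_euclNorm.comp_continuousOn hr)).bddAbove) (mem_image_of_mem _ ht)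

theorem mul_sub_le_integral_of_mul_le_on_Icc {f g : ℝ → ℝ} {a s s' b c M : ℝ} (has : a ≤ s)
    (hss' : s ≤ s') (hs'b : s' ≤ b) (hf : IntervalIntegrable f volume a b)
    (hg : IntervalIntegrable g volume a b) (hf₀ : ∀ t ∈ Icc a b, 0 ≤ f t)
    (hgM : ∀ t ∈ Icc a b, g t ≤ M) (hc : 0 ≤ c) (hfg : ∀ t ∈ Icc s s', c * g t ≤ f t) :
    c * ((∫ t in a..b, g t) - (s - a + (b - s')) * M) ≤ ∫ t in a..b, f t := by
  have hab := (has.trans hss').trans hs'b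
  have mem : ∀ {x}, a ≤ x → x ≤ b → x ∈ uIcc a b := fun h₁ h₂ => by
    rw [uIcc_of_le hab]; exact ⟨h₁, h₂⟩
  have hs := mem has (hss'.trans hs'b)
  have hs' := mem (has.trans hss') hs'b
  have piece : ∀ {φ : ℝ → ℝ}, IntervalIntegrable φ volume a b → ∀ {x y}, x ∈ uIcc a b →
      y ∈ uIcc a b → IntervalIntegrable φ volume x y :=
    fun h _ _ hx hy => h.mono_set (uIcc_subset_uIcc hx hy)
  have ha := mem le_rfl hab
  have hb := mem hab le_rfl
  rw [← intervalIntegral.integral_add_adjacent_intervals (piece hf ha hs) (piece hf hs hb),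
    ← intervalIntegral.integral_add_adjacent_intervals (piece hf hs hs') (piece hf hs' hb),
    ← intervalIntegral.integral_add_adjacent_intervals (piece hg ha hs) (piece hg hs hb),
    ← intervalIntegral.integral_add_adjacent_intervals (piece hg hs hs') (piece hg hs' hb)]
  have hf_ends : 0 ≤ (∫ t in a..s, f t) + ∫ t in s'..b, f t :=
    add_nonneg
      (intervalIntegral.integral_nonneg has fun t ht =>
        hf₀ t ⟨ht.1, ht.2.trans (hss'.trans hs'b)⟩)
      (intervalIntegral.integral_nonneg hs'b fun t ht =>
        hf₀ t ⟨(has.trans hss').trans ht.1, ht.2⟩)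
  have hg_ends : (∫ t in a..s, g t) + ∫ t in s'..b, g t ≤ (s - a + (b - s')) * M := by
    have h₁ := intervalIntegral.integral_mono_on has (piece hg ha hs) intervalIntegrable_const
      fun t ht => hgM t ⟨ht.1, ht.2.trans (hss'.trans hs'b)⟩
    have h₂ := intervalIntegral.integral_mono_on hs'b (piece hg hs' hb) intervalIntegrable_const
      fun t ht => hgM t ⟨(has.trans hss').trans ht.1, ht.2⟩
    simp only [intervalIntegral.integral_const, smul_eq_mul] at h₁ h₂
    linarith
  have hfg_mid : c * ∫ t in s..s', g t ≤ ∫ t in s..s', f t := by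
    simpa using intervalIntegral.integral_mono_on hss' ((piece hg hs hs').const_mul c)
      (piece hf hs hs') hfg
  calc c * ((∫ t in a..s, g t) + ((∫ t in s..s', g t) + ∫ t in s'..b, g t)
        - (s - a + (b - s')) * M)
      ≤ c * ∫ t in s..s', g t := by gcongr; linarith
    _ ≤ (∫ t in a..s, f t) + ((∫ t in s..s', f t) + ∫ t in s'..b, f t) := by linarith

theorem stmt4_general (n : ℕ) (a b : ℝ) (hab : a < b)
    (A : ℝ → Matrix (Fin n) (Fin n) ℝ)
    (hA : ∀ i j, ContDiffOn ℝ 1 (fun t => A t i j) (Set.Icc a b))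
    (hdet : ∀ t ∈ Set.Ioo a b, (A t).det ≠ 0)
    (νa : ℕ)
    (α γ κ : ℝ) (hα : 0 < α) :
    ∃ lam > 0, ∀ r : ℝ → Fin n → ℝ, ContinuousOn r (Set.Icc a b) →
      intNorm a b r ≥ α * supNorm a b r →
      (∀ t, a ≤ t → t < a + γ → t ≤ b →
        euclNorm ((A t).mulVec (r t)) ≤ κ * (t - a) ^ νa * supNorm a b r) →
      (∫ t in a..b, euclNorm ((A t).mulVec (r t))) ≥ lam * intNorm a b r := by
  have hAc : ContinuousOn A (Icc a b) :=
    continuousOn_pi.2 fun i => continuousOn_pi.2 fun j => (hA i j).continuousOn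
  set δ := min (α / 4) ((b - a) / 2)
  have hδ : 0 < δ := lt_min (by positivity) (by linarith)
  have hδα : δ ≤ α / 4 := min_le_left _ _
  have hδba : δ ≤ (b - a) / 2 := min_le_right _ _
  obtain ⟨c, hc, hcA⟩ :=
    (isCompact_Icc (a := a + δ) (b := b - δ)).exists_pos_mul_euclNorm_le_euclNorm_mulVec
    (hAc.mono (Icc_subset_Icc (by linarith) (by linarith)))
    fun t ht => hdet t ⟨by linarith [ht.1], by linarith [ht.2]⟩
  refine ⟨c / 2, by positivity, fun r hr hint _ => ?_⟩
  have hAr : ContinuousOn (fun t => (A t).mulVec (r t)) (Icc a b) :=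
    (continuous_fst.matrix_mulVec continuous_snd).comp_continuousOn (hAc.prodMk hr)
  have hsup : 0 ≤ supNorm a b r :=
    (euclNorm_nonneg _).trans (euclNorm_le_supNorm hr (left_mem_Icc.2 hab.le))
  have hloss : 2 * δ * supNorm a b r ≤ intNorm a b r / 2 := by nlinarith
  have key : c * (intNorm a b r - 2 * δ * supNorm a b r) ≤
      ∫ t in a..b, euclNorm ((A t).mulVec (r t)) := by
    have := mul_sub_le_integral_of_mul_le_on_Icc (M := supNorm a b r)
      (by linarith) (by linarith) (by linarith)
      ((continuous_euclNorm.comp_continuousOn hAr).intervalIntegrable_of_Icc hab.le)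
      ((continuous_euclNorm.comp_continuousOn hr).intervalIntegrable_of_Icc hab.le)
      (fun t _ => euclNorm_nonneg _) (fun t ht => euclNorm_le_supNorm hr ht) hc.le
      fun t ht => hcA t ht (r t)
    rwa [show a + δ - a + (b - (b - δ)) = 2 * δ by ring] at this
  calc c / 2 * intNorm a b r ≤ c * (intNorm a b r - 2 * δ * supNorm a b r) := by nlinarith
    _ ≤ _ := key

theorem stmt4 (n : ℕ) (a b : ℝ) (hab : a < b)
    (A : ℝ → Matrix (Fin n) (Fin n) ℝ)
    (hA : ∀ i j, ContDiffOn ℝ 1 (fun t => A t i j) (Set.Icc a b))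
    (hdet : ∀ t ∈ Set.Ioo a b, (A t).det ≠ 0)
    (hdeta : (A a).det = 0) (hdetb : (A b).det ≠ 0)
    (ha : ℝ) (hha : ha ≠ 0) (νa : ℕ) (hνa : 0 < νa)
    (hasyma : (fun t => (A (a + t)).det - ha * t ^ νa) =o[𝓝[>] (0 : ℝ)] fun t => t ^ νa)
    (α γ κ : ℝ) (hα : 0 < α) (hγ : 0 < γ) (hκ : 0 < κ) :
    ∃ lam > 0, ∀ r : ℝ → Fin n → ℝ, ContinuousOn r (Set.Icc a b) →
      intNorm a b r ≥ α * supNorm a b r →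
      (∀ t, a ≤ t → t < a + γ → t ≤ b →
        euclNorm ((A t).mulVec (r t)) ≤ κ * (t - a) ^ νa * supNorm a b r) →
      (∫ t in a..b, euclNorm ((A t).mulVec (r t))) ≥ lam * intNorm a b r :=
  stmt4_general n a b hab A hA hdet νa α γ κ hα
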